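/- Let θ ∈ (0, π/2] and r > 0, and set t = r·e^{−iθ}. If Re(e^{2iθ}·ξ(t)) = 0, then Im(e^{2iθ}·ξ(t)) < 0. (Equivalently: the curve r ↦ e^{2iθ}·ξ(r·e^{−iθ}) crosses the imaginary axis only in its negative half, which is the key step in showing that arg(e^{2iθ}·ξ(t)) < 0 along the whole ray.) -/

import Mathlib

/-
Put `s = t + R(t)` and `L = Log s`. Since `(t + R)(t - R) = 1`, we get `cosh L = t`, `sinh L = R`,
and with `z = 2L` the identities `ξ(t) = (sinh z - z)/4` and `cosh z + 1 = 2t²`; hence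
`e^{2iθ} ξ(t) = (r²/2) (sinh z - z)/(cosh z + 1)`. For `t` in the fourth quadrant, `s` lies in the
fourth quadrant outside the unit circle, so `z = u - iv` with `u > 0` and `0 < v ≤ π`.
The claim is then a real inequality. With `A`, `B` the imaginary and real parts of
`(sinh z - z) · conj (cosh z + 1)`, one has the identity
`sinh u sin v · A + (1 + cosh u cos v) · B = (cos v sinh u - u) (cosh u + cos v)²`,
so on `B = 0` it suffices to show `cos v sinh u < u`; the opposite case is ruled out using
`v < tan v` and `sinh u ≤ u cosh u`.
-/

open Complex Real

/-- The branch `R(t) = √(t-1)·√(t+1)` with principal complex square roots. -/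
noncomputable def Rb (t : ℂ) : ℂ := (t - 1) ^ ((1 : ℂ)/2) * (t + 1) ^ ((1 : ℂ)/2)

/-- `ξ(t) = (1/2)(t·R(t) − Log(t + R(t)))` with the principal logarithm. -/
noncomputable def xi (t : ℂ) : ℂ := (1/2 : ℂ) * (t * Rb t - Complex.log (t + Rb t))

lemma Real.sinh_le_mul_cosh {x : ℝ} (hx : 0 ≤ x) : Real.sinh x ≤ x * Real.cosh x := by
  rcases hx.eq_or_lt with rfl | hx
  · simp
  obtain ⟨c, ⟨hc0, hcx⟩, hc⟩ := exists_hasDerivAt_eq_slope Real.sinh Real.cosh hx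
    Real.continuous_sinh.continuousOn fun y _ => Real.hasDerivAt_sinh y
  rw [Real.sinh_zero, sub_zero, sub_zero, eq_div_iff hx.ne'] at hc
  rw [← hc, mul_comm]
  gcongr
  exact Real.cosh_le_cosh.2 (by rw [abs_of_pos hc0, abs_of_pos (hc0.trans hcx)]; exact hcx.le)

lemma Real.cosh_add_cos_pos {u : ℝ} (hu : u ≠ 0) (v : ℝ) : 0 < Real.cosh u + Real.cos v := by
  linarith [Real.one_lt_cosh.2 hu, Real.neg_one_le_cos v]

-- `reNumer u v` and `imNumer u v` are the real and imaginary parts of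
-- `(sinh z - z) * conj (cosh z + 1)` at `z = u - v i`.
noncomputable def reNumer (u v : ℝ) : ℝ :=
  (Real.sinh u * Real.cos v - u) * (1 + Real.cosh u * Real.cos v)
    + (Real.cosh u * Real.sin v - v) * (Real.sinh u * Real.sin v)

noncomputable def imNumer (u v : ℝ) : ℝ :=
  (Real.sinh u * Real.cos v - u) * (Real.sinh u * Real.sin v)
    - (Real.cosh u * Real.sin v - v) * (1 + Real.cosh u * Real.cos v)

lemma sinh_mul_sin_mul_imNumer_add (u v : ℝ) :
    Real.sinh u * Real.sin v * imNumer u v + (1 + Real.cosh u * Real.cos v) * reNumer u v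
      = (Real.cos v * Real.sinh u - u) * (Real.cosh u + Real.cos v) ^ 2 := by
  have hC := Real.cosh_sq_sub_sinh_sq u
  have hs := Real.sin_sq_add_cos_sq v
  unfold imNumer reNumer
  linear_combination
    (u * (1 - Real.cos v ^ 2) - Real.sinh u * Real.cos v * Real.sin v ^ 2) * hC
    + ((1 + Real.cosh u * Real.cos v) * Real.sinh u * Real.cosh u
      - (Real.sinh u * Real.cos v + Real.sinh u * Real.cosh u + u * Real.sinh u ^ 2)) * hs

lemma cos_mul_sinh_lt_of_reNumer_eq_zero {u v : ℝ} (hu : 0 < u) (hv : 0 < v) (hvπ : v < π)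
    (hB : reNumer u v = 0) : Real.cos v * Real.sinh u < u := by
  have hS : 0 < Real.sinh u := Real.sinh_pos_iff.2 hu
  have hs : 0 < Real.sin v := Real.sin_pos_of_pos_of_lt_pi hv hvπ
  have hC := Real.cosh_sq_sub_sinh_sq u
  have hsc := Real.sin_sq_add_cos_sq v
  by_contra! h
  have hc : 0 < Real.cos v := pos_of_mul_pos_left (hu.trans_le h) hS.le
  have hv2 : v < π / 2 := by
    by_contra! hv2
    linarith [Real.cos_nonpos_of_pi_div_two_le_of_le hv2 (by linarith)]
  have hcv : Real.cos v * v < Real.sin v := by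
    have := Real.lt_tan hv hv2
    rwa [Real.tan_eq_sin_div_cos, lt_div_iff₀ hc, mul_comm] at this
  have hA : 0 ≤ imNumer u v := by
    have key := sinh_mul_sin_mul_imNumer_add u v
    rw [hB, mul_zero, add_zero] at key
    refine (mul_nonneg_iff_of_pos_left (mul_pos hS hs)).1 (key ▸ ?_)
    exact mul_nonneg (by linarith) (sq_nonneg _)
  -- `sinh u ≤ u cosh u` and `u ≤ cos v sinh u` give `sin v ≤ u`
  have hsu : Real.sin v ^ 2 ≤ u ^ 2 := by
    have h1 := Real.sinh_le_mul_cosh hu.le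
    have h2 : Real.sinh u ^ 2 ≤ u ^ 2 * Real.cosh u ^ 2 := by
      rw [← mul_pow]; exact pow_le_pow_left₀ hS.le h1 2
    have h3 : u ^ 2 ≤ Real.cos v ^ 2 * Real.sinh u ^ 2 := by
      rw [← mul_pow]; exact pow_le_pow_left₀ hu.le h 2
    have h4 : Real.sin v ^ 2 * Real.sinh u ^ 2 ≤ u ^ 2 * Real.sinh u ^ 2 := by
      nlinarith
    exact le_of_mul_le_mul_right h4 (by positivity)
  have hP : 0 < 1 + Real.cosh u * Real.cos v := by positivity
  have hcA : Real.cos v * imNumer u v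
      < Real.sin v * (Real.sin v ^ 2 - u * (Real.cos v * Real.sinh u)) := by
    have := mul_lt_mul_of_pos_right hcv hP
    unfold imNumer
    linear_combination this - Real.cos v ^ 2 * Real.sin v * hC - Real.sin v * hsc
  nlinarith [mul_nonneg hc.le hA, mul_le_mul_of_nonneg_left h hu.le]

lemma imNumer_neg_of_reNumer_eq_zero {u v : ℝ} (hu : 0 < u) (hv : 0 < v) (hvπ : v ≤ π)
    (hB : reNumer u v = 0) : imNumer u v < 0 := by
  have hS : 0 < Real.sinh u := Real.sinh_pos_iff.2 hu
  have hvπ : v < π := by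
    refine hvπ.lt_of_ne fun hπ => ?_
    have : reNumer u v = (Real.sinh u + u) * (Real.cosh u - 1) := by
      simp only [reNumer, hπ, Real.cos_pi, Real.sin_pi]
      ring
    linarith [mul_pos (add_pos hS hu) (sub_pos.2 (Real.one_lt_cosh.2 hu.ne'))]
  have hs : 0 < Real.sin v := Real.sin_pos_of_pos_of_lt_pi hv hvπ
  have key := sinh_mul_sin_mul_imNumer_add u v
  rw [hB, mul_zero, add_zero] at key
  refine neg_of_mul_neg_right (key ▸ mul_neg_of_neg_of_pos ?_
    (pow_pos (Real.cosh_add_cos_pos hu.ne' v) 2)) (mul_pos hS hs).le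
  exact sub_neg.2 (cos_mul_sinh_lt_of_reNumer_eq_zero hu hv hvπ hB)

lemma Complex.sinh_ofReal_sub_ofReal_mul_I (u v : ℝ) :
    sinh (u - v * I) = ↑(Real.sinh u * Real.cos v) - ↑(Real.cosh u * Real.sin v) * I := by
  rw [sinh_sub, sinh_mul_I, cosh_mul_I]
  push_cast
  ring

lemma Complex.cosh_ofReal_sub_ofReal_mul_I (u v : ℝ) :
    cosh (u - v * I) = ↑(Real.cosh u * Real.cos v) - ↑(Real.sinh u * Real.sin v) * I := by
  rw [cosh_sub, sinh_mul_I, cosh_mul_I]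
  push_cast
  ring

lemma normSq_cosh_ofReal_sub_ofReal_mul_I_add_one (u v : ℝ) :
    normSq (cosh (u - v * I) + 1) = (Real.cosh u + Real.cos v) ^ 2 := by
  have hC := Real.cosh_sq_sub_sinh_sq u
  have hs := Real.sin_sq_add_cos_sq v
  rw [cosh_ofReal_sub_ofReal_mul_I, normSq_apply]
  simp only [add_re, add_im, sub_re, sub_im, mul_re, mul_im, ofReal_re, ofReal_im, I_re, I_im,
    one_re, one_im]
  linear_combination (-Real.sin v ^ 2) * hC + (Real.cosh u ^ 2 - 1) * hs

lemma re_sinh_sub_self_div_cosh_add_one (u v : ℝ) :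
    ((sinh (u - v * I) - (u - v * I)) / (cosh (u - v * I) + 1)).re
      = reNumer u v / (Real.cosh u + Real.cos v) ^ 2 := by
  rw [div_re, normSq_cosh_ofReal_sub_ofReal_mul_I_add_one, ← add_div, reNumer]
  simp only [sinh_ofReal_sub_ofReal_mul_I, cosh_ofReal_sub_ofReal_mul_I, add_re, add_im,
    sub_re, sub_im, mul_re, mul_im, ofReal_re, ofReal_im, I_re, I_im, one_re, one_im]
  ring

lemma im_sinh_sub_self_div_cosh_add_one (u v : ℝ) :
    ((sinh (u - v * I) - (u - v * I)) / (cosh (u - v * I) + 1)).im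
      = imNumer u v / (Real.cosh u + Real.cos v) ^ 2 := by
  rw [div_im, normSq_cosh_ofReal_sub_ofReal_mul_I_add_one, ← sub_div, imNumer]
  simp only [sinh_ofReal_sub_ofReal_mul_I, cosh_ofReal_sub_ofReal_mul_I, add_re, add_im,
    sub_re, sub_im, mul_re, mul_im, ofReal_re, ofReal_im, I_re, I_im, one_re, one_im]
  ring

lemma im_sinh_sub_self_div_cosh_add_one_neg {u v : ℝ} (hu : 0 < u) (hv : 0 < v) (hvπ : v ≤ π)
    (hre : ((sinh (u - v * I) - (u - v * I)) / (cosh (u - v * I) + 1)).re = 0) :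
    ((sinh (u - v * I) - (u - v * I)) / (cosh (u - v * I) + 1)).im < 0 := by
  have hpos := pow_pos (Real.cosh_add_cos_pos hu.ne' v) 2
  rw [re_sinh_sub_self_div_cosh_add_one, div_eq_zero_iff, or_iff_left hpos.ne'] at hre
  rw [im_sinh_sub_self_div_cosh_add_one]
  exact div_neg_of_neg_of_pos (imNumer_neg_of_reNumer_eq_zero hu hv hvπ hre) hpos

lemma Rb_sq (t : ℂ) : Rb t ^ 2 = t ^ 2 - 1 := by
  rw [Rb, mul_pow, one_div, cpow_ofNat_inv_pow, cpow_ofNat_inv_pow]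
  ring

lemma add_Rb_mul_sub_Rb (t : ℂ) : (t + Rb t) * (t - Rb t) = 1 := by
  linear_combination -Rb_sq t

lemma add_Rb_ne_zero (t : ℂ) : t + Rb t ≠ 0 :=
  left_ne_zero_of_mul_eq_one (add_Rb_mul_sub_Rb t)

lemma exp_neg_log_add_Rb (t : ℂ) : exp (-log (t + Rb t)) = t - Rb t := by
  rw [Complex.exp_neg, exp_log (add_Rb_ne_zero t)]
  exact inv_eq_of_mul_eq_one_right (add_Rb_mul_sub_Rb t)

lemma cosh_log_add_Rb (t : ℂ) : cosh (log (t + Rb t)) = t := by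
  rw [← mul_right_inj' (two_ne_zero' ℂ), two_cosh, exp_neg_log_add_Rb, exp_log (add_Rb_ne_zero t)]
  ring

lemma sinh_log_add_Rb (t : ℂ) : sinh (log (t + Rb t)) = Rb t := by
  rw [← mul_right_inj' (two_ne_zero' ℂ), two_sinh, exp_neg_log_add_Rb, exp_log (add_Rb_ne_zero t)]
  ring

lemma xi_eq_mul_sinh_sub_self_div_cosh_add_one {t : ℂ} (ht : t ≠ 0) :
    xi t = t ^ 2 / 2 * ((sinh (2 * log (t + Rb t)) - 2 * log (t + Rb t))
      / (cosh (2 * log (t + Rb t)) + 1)) := by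
  have hcosh : cosh (2 * log (t + Rb t)) + 1 = 2 * t ^ 2 := by
    rw [Complex.cosh_two_mul, cosh_log_add_Rb, sinh_log_add_Rb, Rb_sq]
    ring
  rw [hcosh, Complex.sinh_two_mul, cosh_log_add_Rb, sinh_log_add_Rb, xi]
  field_simp

lemma re_pos_and_im_neg_cpow_half {z : ℂ} (hz : z.im < 0) :
    0 < (z ^ ((1 : ℂ) / 2)).re ∧ (z ^ ((1 : ℂ) / 2)).im < 0 := by
  have hz0 : z ≠ 0 := fun h => by simp [h] at hz
  have harg : -π < arg z ∧ arg z < 0 := ⟨neg_pi_lt_arg z, arg_neg_iff.2 hz⟩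
  have him : (log z * ((1 : ℂ) / 2)).im = arg z / 2 := by
    simp [log_im, div_eq_mul_inv]
  rw [cpow_def_of_ne_zero hz0, exp_re, exp_im, him]
  constructor
  · exact mul_pos (Real.exp_pos _) (Real.cos_pos_of_mem_Ioo ⟨by linarith, by linarith⟩)
  · exact mul_neg_of_pos_of_neg (Real.exp_pos _)
      (Real.sin_neg_of_neg_of_neg_pi_lt (by linarith) (by linarith))

lemma Rb_im_neg {t : ℂ} (ht : t.im < 0) : (Rb t).im < 0 := by
  obtain ⟨h1re, h1im⟩ := re_pos_and_im_neg_cpow_half (z := t - 1) (by simpa using ht)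
  obtain ⟨h2re, h2im⟩ := re_pos_and_im_neg_cpow_half (z := t + 1) (by simpa using ht)
  rw [Rb, mul_im]
  nlinarith

lemma Rb_re_nonneg {t : ℂ} (him : t.im < 0) (hre : 0 ≤ t.re) : 0 ≤ (Rb t).re := by
  have h : (Rb t).re * (Rb t).im = t.re * t.im := by
    have := congrArg im (Rb_sq t)
    simp only [sq, mul_im, sub_im, one_im, sub_zero] at this
    linarith
  nlinarith [Rb_im_neg him]

lemma one_lt_norm_add_Rb {t : ℂ} (him : t.im < 0) (hre : 0 ≤ t.re) : 1 < ‖t + Rb t‖ := by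
  -- `t ± Rb t` are mutually inverse, and `t + Rb t` is the longer of the two
  have hlt : normSq (t - Rb t) < normSq (t + Rb t) := by
    simp only [normSq_apply, add_re, add_im, sub_re, sub_im]
    nlinarith [mul_nonneg hre (Rb_re_nonneg him hre), mul_pos_of_neg_of_neg him (Rb_im_neg him)]
  have hprod : normSq (t + Rb t) * normSq (t - Rb t) = 1 := by
    rw [← normSq_mul, add_Rb_mul_sub_Rb, normSq_one]
  have : 1 < normSq (t + Rb t) := by nlinarith [normSq_nonneg (t - Rb t)]
  rw [normSq_eq_norm_sq] at this
  nlinarith [norm_nonneg (t + Rb t)]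

lemma exists_two_mul_log_add_Rb_eq {t : ℂ} (him : t.im < 0) (hre : 0 ≤ t.re) :
    ∃ u v : ℝ, 0 < u ∧ 0 < v ∧ v ≤ π ∧ 2 * log (t + Rb t) = u - v * I := by
  refine ⟨2 * Real.log ‖t + Rb t‖, -2 * arg (t + Rb t),
    by linarith [Real.log_pos (one_lt_norm_add_Rb him hre)], ?_, ?_, ?_⟩
  · have : (t + Rb t).im < 0 := by simpa using add_neg him (Rb_im_neg him)
    linarith [arg_neg_iff.2 this]
  · have : 0 ≤ (t + Rb t).re := by simpa using add_nonneg hre (Rb_re_nonneg him hre)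
    linarith [neg_pi_div_two_le_arg_iff.2 (Or.inl this)]
  · apply Complex.ext <;> simp [log_re, log_im]

lemma exp_two_mul_I_mul_polar_sq (θ r : ℝ) :
    Complex.exp (2 * (θ : ℂ) * Complex.I) * ((r : ℂ) * Complex.exp (-(θ : ℂ) * Complex.I)) ^ 2
      = (r : ℂ) ^ 2 := by
  rw [mul_pow, ← Complex.exp_nat_mul, mul_left_comm, ← Complex.exp_add]
  push_cast
  ring_nf
  rw [Complex.exp_zero, mul_one]

theorem stmt3 (θ r : ℝ) (hθ : θ ∈ Set.Ioc 0 (π/2)) (hr : 0 < r)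
    (t : ℂ) (ht : t = (r : ℂ) * Complex.exp (-(θ : ℂ) * Complex.I))
    (hre : (Complex.exp (2 * (θ : ℂ) * Complex.I) * xi t).re = 0) :
    (Complex.exp (2 * (θ : ℂ) * Complex.I) * xi t).im < 0 := by
  obtain ⟨hθ0, hθπ⟩ := hθ
  have him : t.im < 0 := by
    rw [ht, im_ofReal_mul, ← ofReal_neg, exp_ofReal_mul_I_im, Real.sin_neg, mul_neg, neg_lt_zero]
    exact mul_pos hr (Real.sin_pos_of_pos_of_lt_pi hθ0 (by linarith [Real.pi_pos]))
  have hre0 : 0 ≤ t.re := by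
    rw [ht, re_ofReal_mul, ← ofReal_neg, exp_ofReal_mul_I_re, Real.cos_neg]
    exact mul_nonneg hr.le (Real.cos_nonneg_of_mem_Icc ⟨by linarith, hθπ⟩)
  obtain ⟨u, v, hu, hv, hvπ, hz⟩ := exists_two_mul_log_add_Rb_eq him hre0
  have hW : Complex.exp (2 * (θ : ℂ) * Complex.I) * xi t = ((r ^ 2 / 2 : ℝ) : ℂ)
      * ((sinh (u - v * I) - (u - v * I)) / (cosh (u - v * I) + 1)) := by
    rw [xi_eq_mul_sinh_sub_self_div_cosh_add_one (fun h => by simp [h] at him), hz, ← mul_assoc]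
    congr 1
    rw [ht, ← mul_div_assoc, exp_two_mul_I_mul_polar_sq]
    norm_cast
  have hr2 : 0 < r ^ 2 / 2 := by positivity
  rw [hW, re_ofReal_mul, mul_eq_zero, or_iff_right hr2.ne'] at hre
  rw [hW, im_ofReal_mul]
  exact mul_neg_of_pos_of_neg hr2 (im_sinh_sub_self_div_cosh_add_one_neg hu hv hvπ hre)
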